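/- Suppose d ≥ 1, 1 ≤ Δ ≤ n−1, H is (n−Δ−1)-regular, 1 ≤ i ≤ (2/3)dΔ, and dn ≥ 2i + 10d. Then for every d-regular simple graph G on V with exactly i red edges, the number b_{B1+}(G) of Class B1+ octagons in G satisfies 2i(Δ−1)(d−1)·(dn−2i−10d)² − 6i(Δ−1)d³n(d+Δ) ≤ b_{B1+}(G) ≤ 2i(Δ−1)d·(dn)². -/

import Mathlib

open SimpleGraph
open scoped Classical

/-- Distinctness of an 8-tuple, except that `v2 = v7` is allowed. -/
def Distinct8 {n : ℕ} (v0 v1 v2 v3 v4 v5 v6 v7 : Fin n) : Prop :=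
  List.Pairwise (· ≠ ·) [v0, v1, v3, v4, v5, v6] ∧
  (∀ x ∈ [v0, v1, v3, v4, v5, v6], v2 ≠ x ∧ v7 ≠ x)

/-- A Class B1+ octagon in `G` (host graph `H`): `v1v2` is a red edge of `G`; the pair
`v0v1` is red (it may or may not be an edge of `G`); `v0v7` is an edge of `G` (of either
colour); `v3v4` and `v5v6` are black edges of `G`; `v2v3`, `v4v5`, `v6v7` are black
non-edges of `G`; vertices distinct except `v2 = v7` allowed. -/
def OctB1Plus {n : ℕ} (H G : SimpleGraph (Fin n))
    (v0 v1 v2 v3 v4 v5 v6 v7 : Fin n) : Prop :=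
  (G.Adj v1 v2 ∧ Hᶜ.Adj v1 v2) ∧
  Hᶜ.Adj v0 v1 ∧
  G.Adj v0 v7 ∧
  (G.Adj v3 v4 ∧ H.Adj v3 v4) ∧
  (G.Adj v5 v6 ∧ H.Adj v5 v6) ∧
  (¬ G.Adj v2 v3 ∧ H.Adj v2 v3) ∧
  (¬ G.Adj v4 v5 ∧ H.Adj v4 v5) ∧
  (¬ G.Adj v6 v7 ∧ H.Adj v6 v7) ∧
  Distinct8 v0 v1 v2 v3 v4 v5 v6 v7

/-- `b_{B1+}(G)`: the number of Class B1+ octagons in `G`. -/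
noncomputable def bB1 {n : ℕ} (H G : SimpleGraph (Fin n)) : ℕ :=
  Nat.card {v : Fin 8 → Fin n //
    OctB1Plus H G (v 0) (v 1) (v 2) (v 3) (v 4) (v 5) (v 6) (v 7)}

/-!
Octagons are counted by choosing, in turn, the red dart `(v1, v2)` of `G` (`2i` ways), the vertex
`v0` among the other `Δ - 1` red neighbours of `v1`, the vertex `v7` among the `G`-neighbours of
`v0` (between `d - 1` and `d` ways), and finally the two black darts `(v3, v4)`, `(v5, v6)` of `G`,
of which there are `m = dn - 2i`. The upper bound forgets all remaining constraints. For the lower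
bound, at least `m - 8d` black darts avoid the four vertices already chosen and then at least
`m - 12d` avoid those six; requiring the joins `v2v3`, `v4v5`, `v6v7` to be black non-edges
excludes at most `(Δ + d) d m` pairs per join, since a join fails only when its second endpoint is
a `G`- or red neighbour of its first.
-/

open Finset

section PairCounting

variable {α β V : Type*}

theorem card_filter_product_eq_sum_left (s : Finset α) (t : Finset β) (P : α × β → Prop)
    [DecidablePred P] : #{x ∈ s ×ˢ t | P x} = ∑ a ∈ s, #{b ∈ t | P (a, b)} := by
  simp only [card_filter, sum_product]

theorem card_filter_product_eq_sum_right (s : Finset α) (t : Finset β) (P : α × β → Prop)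
    [DecidablePred P] : #{x ∈ s ×ˢ t | P x} = ∑ b ∈ t, #{a ∈ s | P (a, b)} := by
  simp only [card_filter, sum_product_right]

theorem mul_le_sum_of_card_le {R : Type*} [CommRing R] [LinearOrder R] [IsStrictOrderedRing R]
    {s : Finset α} {f : α → R} {k : ℕ} {c : R} (hk : k ≤ #s) (hf₀ : ∀ x ∈ s, 0 ≤ f x)
    (hf : ∀ x ∈ s, c ≤ f x) : k * c ≤ ∑ x ∈ s, f x := by
  rcases le_or_gt c 0 with hc | hc
  · exact (mul_nonpos_of_nonneg_of_nonpos k.cast_nonneg hc).trans (sum_nonneg hf₀)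
  · calc (k : R) * c ≤ #s * c := by gcongr
      _ ≤ ∑ x ∈ s, f x := by simpa using card_nsmul_le_sum s f c hf

theorem card_filter_mem_le_of_fiber_le [DecidableEq β] {s : Finset α} {f : α → β} {d : ℕ}
    (hf : ∀ b, #{a ∈ s | f a = b} ≤ d) (S : Finset β) : #{a ∈ s | f a ∈ S} ≤ #S * d := by
  rw [mul_comm]
  refine card_le_mul_card_image_of_maps_to (fun a ha => (mem_filter.1 ha).2) d fun b _ => ?_
  rw [filter_filter]
  exact (card_le_card fun a ha => by simp only [mem_filter] at ha ⊢; exact ⟨ha.1, ha.2.2⟩).trans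
    (hf b)

def Avoids (F : Finset V) (b : V × V) : Prop := b.1 ∉ F ∧ b.2 ∉ F

variable [DecidableEq V] {B : Finset (V × V)} {d : ℕ}

theorem card_le_card_filter_avoids_add (hfst : ∀ w, #{b ∈ B | b.1 = w} ≤ d)
    (hsnd : ∀ w, #{b ∈ B | b.2 = w} ≤ d) (S : Finset V) :
    #B ≤ #{b ∈ B | Avoids S b} + #S * (2 * d) := by
  have hbad : {b ∈ B | ¬Avoids S b} ⊆ {b ∈ B | b.1 ∈ S} ∪ {b ∈ B | b.2 ∈ S} := by
    intro b hb
    simp only [mem_filter, mem_union] at hb ⊢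
    unfold Avoids at hb
    tauto
  calc #B = #{b ∈ B | Avoids S b} + #{b ∈ B | ¬Avoids S b} :=
        (card_filter_add_card_filter_not _).symm
    _ ≤ #{b ∈ B | Avoids S b} + (#S * d + #S * d) := by
        gcongr
        exact (card_le_card hbad).trans <| (card_union_le _ _).trans <| add_le_add
          (card_filter_mem_le_of_fiber_le hfst S) (card_filter_mem_le_of_fiber_le hsnd S)
    _ = _ := by ring

theorem le_card_filter_avoids_pairs (hfst : ∀ w, #{b ∈ B | b.1 = w} ≤ d)
    (hsnd : ∀ w, #{b ∈ B | b.2 = w} ≤ d) {F : Finset V} {k : ℕ} (hF : #F ≤ k) :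
    (#B - 2 * d * k) * (#B - 2 * d * (k + 2)) ≤
      #{q ∈ B ×ˢ B | Avoids F q.1 ∧ Avoids (insert q.1.1 (insert q.1.2 F)) q.2} := by
  have hfirst : #B - 2 * d * k ≤ #{b ∈ B | Avoids F b} := by
    have := card_le_card_filter_avoids_add hfst hsnd F
    have : #F * (2 * d) ≤ 2 * d * k := by rw [mul_comm]; gcongr
    omega
  have hsecond : ∀ b : V × V, #B - 2 * d * (k + 2) ≤
      #{b' ∈ B | Avoids (insert b.1 (insert b.2 F)) b'} := by
    intro b
    have := card_le_card_filter_avoids_add hfst hsnd (insert b.1 (insert b.2 F))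
    have : #(insert b.1 (insert b.2 F)) ≤ k + 2 :=
      (card_insert_le _ _).trans (by have := card_insert_le b.2 F; omega)
    have : #(insert b.1 (insert b.2 F)) * (2 * d) ≤ 2 * d * (k + 2) := by rw [mul_comm]; gcongr
    omega
  rw [card_filter_product_eq_sum_left]
  calc (#B - 2 * d * k) * (#B - 2 * d * (k + 2))
      ≤ #{b ∈ B | Avoids F b} * (#B - 2 * d * (k + 2)) := by gcongr
    _ ≤ ∑ b ∈ B with Avoids F b, #{b' ∈ B | Avoids (insert b.1 (insert b.2 F)) b'} := by
        simpa using card_nsmul_le_sum _ _ _ fun b _ => hsecond b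
    _ ≤ _ := by
        rw [sum_filter]
        gcongr with b
        split_ifs with hb <;> simp [hb]

noncomputable def chainPairs (B : Finset (V × V)) (F : Finset V) (J : SimpleGraph V)
    [DecidableRel J.Adj] (x y : V) : Finset ((V × V) × (V × V)) :=
  {q ∈ B ×ˢ B | Avoids F q.1 ∧ Avoids (insert q.1.1 (insert q.1.2 F)) q.2 ∧
    ¬J.Adj x q.1.1 ∧ ¬J.Adj q.1.2 q.2.1 ∧ ¬J.Adj q.2.2 y}

theorem card_filter_adj_le [Fintype V] {f : V × V → V} (hf : ∀ w, #{b ∈ B | f b = w} ≤ d)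
    {J : SimpleGraph V} [DecidableRel J.Adj] {D : ℕ} (hJ : ∀ v, J.degree v ≤ D) (x : V) :
    #{b ∈ B | J.Adj x (f b)} ≤ D * d := by
  simp_rw [← mem_neighborFinset J x]
  exact (card_filter_mem_le_of_fiber_le hf _).trans
    (Nat.mul_le_mul_right _ ((card_neighborFinset_eq_degree J x).trans_le (hJ x)))

theorem le_card_chainPairs_add [Fintype V] (hfst : ∀ w, #{b ∈ B | b.1 = w} ≤ d)
    (hsnd : ∀ w, #{b ∈ B | b.2 = w} ≤ d) {J : SimpleGraph V} [DecidableRel J.Adj] {D : ℕ}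
    (hJ : ∀ v, J.degree v ≤ D) {F : Finset V} {k : ℕ} (hF : #F ≤ k) (x y : V) :
    (#B - 2 * d * k) * (#B - 2 * d * (k + 2)) ≤ #(chainPairs B F J x y) + 3 * (D * d * #B) := by
  have hfirst : #{q ∈ B ×ˢ B | J.Adj x q.1.1} ≤ D * d * #B := by
    rw [card_filter_product_eq_sum_right, mul_comm]
    exact sum_le_card_nsmul _ _ _ fun _ _ => card_filter_adj_le hfst hJ x
  have hmiddle : #{q ∈ B ×ˢ B | J.Adj q.1.2 q.2.1} ≤ D * d * #B := by
    rw [card_filter_product_eq_sum_left, mul_comm]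
    exact sum_le_card_nsmul _ _ _ fun b _ => card_filter_adj_le hfst hJ b.2
  have hlast : #{q ∈ B ×ˢ B | J.Adj q.2.2 y} ≤ D * d * #B := by
    simp_rw [J.adj_comm _ y]
    rw [card_filter_product_eq_sum_left, mul_comm]
    exact sum_le_card_nsmul _ _ _ fun _ _ => card_filter_adj_le hsnd hJ y
  have hcover : {q ∈ B ×ˢ B | Avoids F q.1 ∧ Avoids (insert q.1.1 (insert q.1.2 F)) q.2} ⊆
      chainPairs B F J x y ∪ ({q ∈ B ×ˢ B | J.Adj x q.1.1} ∪
        {q ∈ B ×ˢ B | J.Adj q.1.2 q.2.1} ∪ {q ∈ B ×ˢ B | J.Adj q.2.2 y}) := by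
    intro q hq
    simp only [chainPairs, mem_filter, mem_union] at hq ⊢
    tauto
  calc (#B - 2 * d * k) * (#B - 2 * d * (k + 2))
      ≤ #{q ∈ B ×ˢ B | Avoids F q.1 ∧ Avoids (insert q.1.1 (insert q.1.2 F)) q.2} :=
        le_card_filter_avoids_pairs hfst hsnd hF
    _ ≤ _ := by
        have := card_le_card hcover
        have := card_union_le (chainPairs B F J x y) ({q ∈ B ×ˢ B | J.Adj x q.1.1} ∪
          {q ∈ B ×ˢ B | J.Adj q.1.2 q.2.1} ∪ {q ∈ B ×ˢ B | J.Adj q.2.2 y})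
        have := card_union_le ({q ∈ B ×ˢ B | J.Adj x q.1.1} ∪
          {q ∈ B ×ˢ B | J.Adj q.1.2 q.2.1}) {q ∈ B ×ˢ B | J.Adj q.2.2 y}
        have := card_union_le {q ∈ B ×ˢ B | J.Adj x q.1.1} {q ∈ B ×ˢ B | J.Adj q.1.2 q.2.1}
        omega

end PairCounting

section Graphs

variable {V : Type*}

theorem not_adj_and_adj_of_not_adj_sup_compl {G H : SimpleGraph V} {x y : V} (hne : x ≠ y)
    (h : ¬(G ⊔ Hᶜ).Adj x y) : ¬G.Adj x y ∧ H.Adj x y := by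
  simp only [sup_adj, compl_adj, not_or, not_and, not_not] at h
  exact ⟨h.1, h.2 hne⟩

variable [Fintype V]

def adjPairs (K : SimpleGraph V) [DecidableRel K.Adj] : Finset (V × V) := {p | K.Adj p.1 p.2}

@[simp]
theorem mem_adjPairs {K : SimpleGraph V} [DecidableRel K.Adj] {p : V × V} :
    p ∈ adjPairs K ↔ K.Adj p.1 p.2 := by
  simp [adjPairs]

theorem card_filter_adjPairs_fst [DecidableEq V] (K : SimpleGraph V) [DecidableRel K.Adj]
    (w : V) :
    #{p ∈ adjPairs K | p.1 = w} = K.degree w := by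
  have : {p ∈ adjPairs K | p.1 = w} = {w} ×ˢ K.neighborFinset w := by
    ext ⟨a, b⟩
    simp only [mem_filter, mem_adjPairs, mem_product, mem_singleton, mem_neighborFinset]
    exact ⟨fun ⟨h, ha⟩ => ⟨ha, ha ▸ h⟩, fun ⟨ha, h⟩ => ⟨ha ▸ h, ha⟩⟩
  rw [this, card_product, card_singleton, one_mul, card_neighborFinset_eq_degree]

theorem card_filter_adjPairs_snd [DecidableEq V] (K : SimpleGraph V) [DecidableRel K.Adj]
    (w : V) :
    #{p ∈ adjPairs K | p.2 = w} = K.degree w := by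
  have : {p ∈ adjPairs K | p.2 = w} = K.neighborFinset w ×ˢ {w} := by
    ext ⟨a, b⟩
    simp only [mem_filter, mem_adjPairs, mem_product, mem_singleton, mem_neighborFinset]
    constructor <;> rintro ⟨h, rfl⟩ <;> exact ⟨h.symm, rfl⟩
  rw [this, card_product, card_singleton, mul_one, card_neighborFinset_eq_degree]

theorem card_adjPairs [DecidableEq V] (K : SimpleGraph V) [DecidableRel K.Adj] :
    #(adjPairs K) = 2 * K.edgeSet.ncard := by
  rw [card_eq_sum_card_fiberwise (f := Prod.fst) (t := univ) fun _ _ => mem_univ _]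
  simp_rw [card_filter_adjPairs_fst]
  rw [sum_degrees_eq_twice_card_edges, ← coe_edgeFinset, Set.ncard_coe_finset]

theorem card_adjPairs_of_isRegularOfDegree [DecidableEq V] {K : SimpleGraph V}
    [DecidableRel K.Adj] {d : ℕ} (hK : K.IsRegularOfDegree d) :
    #(adjPairs K) = Fintype.card V * d := by
  rw [card_eq_sum_card_fiberwise (f := Prod.fst) (t := univ) fun _ _ => mem_univ _]
  simp_rw [card_filter_adjPairs_fst, hK.degree_eq, sum_const, card_univ, smul_eq_mul]

theorem card_adjPairs_inf_add_card_adjPairs_inf_compl [DecidableEq V] (G H : SimpleGraph V)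
    [DecidableRel G.Adj] [DecidableRel H.Adj] :
    #(adjPairs (G ⊓ H)) + #(adjPairs (G ⊓ Hᶜ)) = #(adjPairs G) := by
  rw [← card_filter_add_card_filter_not (s := adjPairs G) (p := fun p => H.Adj p.1 p.2)]
  congr 2 <;> ext p <;> simp only [mem_filter, mem_adjPairs, inf_adj, compl_adj]
  exact ⟨fun h => ⟨h.1, h.2.2⟩, fun h => ⟨h.1, h.1.ne, h.2⟩⟩

theorem degree_sup_le (K L : SimpleGraph V) [DecidableRel K.Adj] [DecidableRel L.Adj] (v : V) :
    (K ⊔ L).degree v ≤ K.degree v + L.degree v := by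
  classical
  simp only [← card_neighborFinset_eq_degree, neighborFinset_sup]
  exact card_union_le _ _

end Graphs

section Octagons

variable {n : ℕ} (H G : SimpleGraph (Fin n))

noncomputable def octCompletions (v0 v1 v2 v7 : Fin n) :
    Finset ((Fin n × Fin n) × (Fin n × Fin n)) :=
  {q | OctB1Plus H G v0 v1 v2 q.1.1 q.1.2 q.2.1 q.2.2 v7}

theorem bB1_eq_sum :
    bB1 H G = ∑ r : Fin n × Fin n, ∑ v0, ∑ v7, #(octCompletions H G v0 r.1 r.2 v7) := by
  let e : (Fin 8 → Fin n) ≃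
      (Fin n × Fin n) × Fin n × Fin n × ((Fin n × Fin n) × (Fin n × Fin n)) :=
    { toFun := fun v => ((v 1, v 2), v 0, v 7, (v 3, v 4), (v 5, v 6))
      invFun := fun x => ![x.2.1, x.1.1, x.1.2, x.2.2.2.1.1, x.2.2.2.1.2, x.2.2.2.2.1,
        x.2.2.2.2.2, x.2.2.1]
      left_inv := fun v => by ext j; fin_cases j <;> rfl
      right_inv := fun _ => rfl }
  refine (Nat.card_congr (e.subtypeEquiv (q := fun x => OctB1Plus H G x.2.1 x.1.1 x.1.2
    x.2.2.2.1.1 x.2.2.2.1.2 x.2.2.2.2.1 x.2.2.2.2.2 x.2.2.1) fun _ => Iff.rfl)).trans ?_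
  rw [Nat.card_eq_fintype_card, Fintype.card_subtype, card_filter]
  simp only [Fintype.sum_prod_type, octCompletions, card_filter]

variable {H G}

@[simp]
theorem mem_octCompletions {v0 v1 v2 v7 : Fin n} {q : (Fin n × Fin n) × (Fin n × Fin n)} :
    q ∈ octCompletions H G v0 v1 v2 v7 ↔
      OctB1Plus H G v0 v1 v2 q.1.1 q.1.2 q.2.1 q.2.2 v7 := by
  simp [octCompletions]

theorem octCompletions_subset (v0 v1 v2 v7 : Fin n) :
    octCompletions H G v0 v1 v2 v7 ⊆ adjPairs (G ⊓ H) ×ˢ adjPairs (G ⊓ H) := by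
  intro q hq
  obtain ⟨-, -, -, h34, h56, -⟩ := mem_octCompletions.1 hq
  exact mem_product.2 ⟨mem_adjPairs.2 h34, mem_adjPairs.2 h56⟩

theorem mem_of_octCompletions_nonempty {v0 v1 v2 v7 : Fin n}
    (h : (octCompletions H G v0 v1 v2 v7).Nonempty) :
    (v1, v2) ∈ adjPairs (G ⊓ Hᶜ) ∧ v0 ∈ Hᶜ.neighborFinset v1 \ {v2} ∧
      v7 ∈ G.neighborFinset v0 := by
  obtain ⟨q, hq⟩ := h
  obtain ⟨h12, h01, h07, -, -, -, -, -, -, hv2⟩ := mem_octCompletions.1 hq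
  have h02 : v0 ≠ v2 := ((hv2 v0 (by simp)).1).symm
  simp only [mem_adjPairs, mem_sdiff, mem_neighborFinset, mem_singleton]
  exact ⟨h12, ⟨h01.symm, h02⟩, h07⟩

theorem chainPairs_subset_octCompletions {v0 v1 v2 v7 : Fin n}
    (h12 : (v1, v2) ∈ adjPairs (G ⊓ Hᶜ)) (h0 : v0 ∈ Hᶜ.neighborFinset v1 \ {v2})
    (h7 : v7 ∈ G.neighborFinset v0 \ {v1}) :
    chainPairs (adjPairs (G ⊓ H)) {v0, v1, v2, v7} (G ⊔ Hᶜ) v2 v7 ⊆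
      octCompletions H G v0 v1 v2 v7 := by
  rintro ⟨⟨v3, v4⟩, ⟨v5, v6⟩⟩ hq
  simp only [chainPairs, Avoids, mem_filter, mem_product, mem_adjPairs, inf_adj,
    mem_insert, mem_singleton, not_or] at hq
  simp only [mem_adjPairs, inf_adj, mem_sdiff, mem_neighborFinset, mem_singleton] at h12 h0 h7
  obtain ⟨⟨⟨h34, h34'⟩, h56, h56'⟩, ⟨h3, h4⟩, ⟨h5, h6⟩, h23, h45, h67⟩ := hq
  refine mem_octCompletions.2 ⟨h12, h0.1.symm, h7.1, ⟨h34, h34'⟩, ⟨h56, h56'⟩,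
    not_adj_and_adj_of_not_adj_sup_compl (Ne.symm h3.2.2.1) h23,
    not_adj_and_adj_of_not_adj_sup_compl (Ne.symm h5.2.1) h45,
    not_adj_and_adj_of_not_adj_sup_compl h6.2.2.2.2.2 h67, ?_⟩
  have := h0.1.ne; have := h7.1.ne; have := h12.1.ne; have := h34.ne; have := h56.ne
  simp only [Distinct8, List.pairwise_cons, List.mem_cons, List.not_mem_nil, or_false,
    forall_eq_or_imp, forall_eq, List.Pairwise.nil, and_true]
  grind

theorem le_card_octCompletions_add {d Δ : ℕ} (hG : ∀ v, G.degree v ≤ d)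
    (hHc : ∀ v, Hᶜ.degree v ≤ Δ) {v0 v1 v2 v7 : Fin n} (h12 : (v1, v2) ∈ adjPairs (G ⊓ Hᶜ))
    (h0 : v0 ∈ Hᶜ.neighborFinset v1 \ {v2}) (h7 : v7 ∈ G.neighborFinset v0 \ {v1}) :
    (#(adjPairs (G ⊓ H)) - 8 * d) * (#(adjPairs (G ⊓ H)) - 12 * d) ≤
      #(octCompletions H G v0 v1 v2 v7) + 3 * ((d + Δ) * d * #(adjPairs (G ⊓ H))) := by
  have hB : ∀ w, (G ⊓ H).degree w ≤ d := fun w => (degree_le_of_le inf_le_left).trans (hG w)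
  have hF : #({v0, v1, v2, v7} : Finset (Fin n)) ≤ 4 := card_le_four
  have := le_card_chainPairs_add (fun w => (card_filter_adjPairs_fst _ w).trans_le (hB w))
    (fun w => (card_filter_adjPairs_snd _ w).trans_le (hB w))
    (fun v => (degree_sup_le G Hᶜ v).trans (add_le_add (hG v) (hHc v))) hF v2 v7
  rw [show 2 * d * 4 = 8 * d by ring, show 2 * d * (4 + 2) = 12 * d by ring] at this
  exact this.trans
    (Nat.add_le_add_right (card_le_card (chainPairs_subset_octCompletions h12 h0 h7)) _)

theorem bB1_le {d Δ : ℕ} (hG : ∀ v, G.degree v ≤ d) (hHc : ∀ v, Hᶜ.degree v ≤ Δ) :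
    bB1 H G ≤ #(adjPairs (G ⊓ Hᶜ)) * ((Δ - 1) * (d * #(adjPairs (G ⊓ H)) ^ 2)) := by
  set m := #(adjPairs (G ⊓ H))
  have hv7 : ∀ v0 v1 v2, ∑ v7, #(octCompletions H G v0 v1 v2 v7) ≤ d * m ^ 2 := fun v0 v1 v2 =>
    calc ∑ v7, #(octCompletions H G v0 v1 v2 v7)
        ≤ ∑ v7 ∈ G.neighborFinset v0, #(octCompletions H G v0 v1 v2 v7) :=
          sum_le_sum_of_ne_zero fun v7 _ h =>
            (mem_of_octCompletions_nonempty (card_ne_zero.1 h)).2.2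
      _ ≤ #(G.neighborFinset v0) * m ^ 2 := by
          refine (sum_le_card_nsmul _ _ _ fun v7 _ => ?_).trans_eq (smul_eq_mul _ _)
          exact (card_le_card (octCompletions_subset v0 v1 v2 v7)).trans_eq (by simp [m, sq])
      _ ≤ d * m ^ 2 := by
          gcongr
          exact (card_neighborFinset_eq_degree G v0).trans_le (hG v0)
  have hv0 : ∀ v1 v2, (v1, v2) ∈ adjPairs (G ⊓ Hᶜ) →
      ∑ v0, ∑ v7, #(octCompletions H G v0 v1 v2 v7) ≤ (Δ - 1) * (d * m ^ 2) := fun v1 v2 h12 =>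
    calc ∑ v0, ∑ v7, #(octCompletions H G v0 v1 v2 v7)
        ≤ ∑ v0 ∈ Hᶜ.neighborFinset v1 \ {v2}, ∑ v7, #(octCompletions H G v0 v1 v2 v7) :=
          sum_le_sum_of_ne_zero fun v0 _ h => by
            obtain ⟨v7, -, h7⟩ := exists_ne_zero_of_sum_ne_zero h
            exact (mem_of_octCompletions_nonempty (card_ne_zero.1 h7)).2.1
      _ ≤ #(Hᶜ.neighborFinset v1 \ {v2}) * (d * m ^ 2) := by
          exact (sum_le_card_nsmul _ _ _ fun v0 _ => hv7 v0 v1 v2).trans_eq (smul_eq_mul _ _)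
      _ ≤ (Δ - 1) * (d * m ^ 2) := by
          gcongr
          have h2 : v2 ∈ Hᶜ.neighborFinset v1 := by
            simpa using (mem_adjPairs.1 h12).2
          rw [card_sdiff_of_subset (singleton_subset_iff.2 h2), card_singleton,
            card_neighborFinset_eq_degree]
          exact Nat.sub_le_sub_right (hHc v1) 1
  calc bB1 H G = ∑ r : Fin n × Fin n, ∑ v0, ∑ v7, #(octCompletions H G v0 r.1 r.2 v7) :=
        bB1_eq_sum H G
    _ ≤ ∑ r ∈ adjPairs (G ⊓ Hᶜ), ∑ v0, ∑ v7, #(octCompletions H G v0 r.1 r.2 v7) :=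
        sum_le_sum_of_ne_zero fun r _ h => by
          obtain ⟨v0, -, h0⟩ := exists_ne_zero_of_sum_ne_zero h
          obtain ⟨v7, -, h7⟩ := exists_ne_zero_of_sum_ne_zero h0
          exact (mem_of_octCompletions_nonempty (card_ne_zero.1 h7)).1
    _ ≤ _ := (sum_le_card_nsmul _ _ _ fun r hr => hv0 r.1 r.2 hr).trans_eq (smul_eq_mul _ _)

theorem le_bB1_of_forall_le {d Δ : ℕ} (hG : ∀ v, d ≤ G.degree v) (hHc : ∀ v, Δ ≤ Hᶜ.degree v)
    {X : ℤ} (hX : ∀ v0 v1 v2 v7, (v1, v2) ∈ adjPairs (G ⊓ Hᶜ) →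
      v0 ∈ Hᶜ.neighborFinset v1 \ {v2} → v7 ∈ G.neighborFinset v0 \ {v1} →
        X ≤ #(octCompletions H G v0 v1 v2 v7)) :
    #(adjPairs (G ⊓ Hᶜ)) * ((Δ - 1 : ℕ) * ((d - 1 : ℕ) * X)) ≤ (bB1 H G : ℤ) := by
  have hsub : ∑ r ∈ adjPairs (G ⊓ Hᶜ), ∑ v0 ∈ Hᶜ.neighborFinset r.1 \ {r.2},
      ∑ v7 ∈ G.neighborFinset v0 \ {r.1}, #(octCompletions H G v0 r.1 r.2 v7) ≤ bB1 H G := by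
    rw [bB1_eq_sum]
    refine (sum_le_sum fun r _ => ?_).trans (sum_le_sum_of_subset (subset_univ _))
    exact (sum_le_sum fun v0 _ => sum_le_sum_of_subset (subset_univ _)).trans
      (sum_le_sum_of_subset (subset_univ _))
  refine le_trans ?_ (Nat.cast_le.2 hsub)
  push_cast
  refine mul_le_sum_of_card_le le_rfl (fun _ _ => by positivity) fun r hr => ?_
  refine mul_le_sum_of_card_le ?_ (fun _ _ => by positivity) fun v0 h0 => ?_
  · refine (Nat.sub_le_sub_right (hHc r.1) 1).trans ?_
    simpa using le_card_sdiff {r.2} (Hᶜ.neighborFinset r.1)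
  refine mul_le_sum_of_card_le ?_ (fun _ _ => by positivity) fun v7 h7 => hX _ _ _ _ hr h0 h7
  refine (Nat.sub_le_sub_right (hG v0) 1).trans ?_
  simpa using le_card_sdiff {r.1} (G.neighborFinset v0)

theorem le_bB1 {d Δ m : ℕ} (hG : G.IsRegularOfDegree d) (hHc : Hᶜ.IsRegularOfDegree Δ)
    (hm : #(adjPairs (G ⊓ H)) = m) (hm₈ : 8 * d ≤ m) :
    #(adjPairs (G ⊓ Hᶜ)) * ((Δ - 1 : ℕ) *
      ((d - 1 : ℕ) * (((m : ℤ) - 8 * d) * (m - 12 * d) - 3 * ((d + Δ) * d * m)))) ≤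
      (bB1 H G : ℤ) := by
  refine le_bB1_of_forall_le (fun v => (hG v).ge) (fun v => (hHc v).ge)
    fun v0 v1 v2 v7 h12 h0 h7 => ?_
  have hcount := le_card_octCompletions_add (fun v => (hG v).le) (fun v => (hHc v).le) h12 h0 h7
  rw [hm] at hcount
  have htrunc : ((m : ℤ) - 8 * d) * (m - 12 * d) ≤
      ((m - 8 * d : ℕ) : ℤ) * ((m - 12 * d : ℕ) : ℤ) := by
    rw [Nat.cast_sub hm₈]
    exact mul_le_mul_of_nonneg_left (by omega) (by omega)
  have := (Nat.cast_le (α := ℤ)).2 hcount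
  push_cast at this
  linarith

end Octagons

theorem octagon_lower_bound_arith {n d Δ i m : ℤ} (hd : 1 ≤ d) (hΔ : 1 ≤ Δ) (hi : 1 ≤ i)
    (hm₀ : 0 ≤ m) (hm : m + 2 * i = d * n) :
    2 * i * (Δ - 1) * (d - 1) * (d * n - 2 * i - 10 * d) ^ 2
        - 6 * i * (Δ - 1) * d ^ 3 * n * (d + Δ) ≤
      2 * i * ((Δ - 1) * ((d - 1) * ((m - 8 * d) * (m - 12 * d) - 3 * ((d + Δ) * d * m)))) := by
  have key : (d - 1) * (d * n - 2 * i - 10 * d) ^ 2 - 3 * d ^ 3 * n * (d + Δ) ≤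
      (d - 1) * ((m - 8 * d) * (m - 12 * d) - 3 * ((d + Δ) * d * m)) := by
    have h2 : 0 ≤ (d + Δ) * d * m := by positivity
    have h3 : d ^ 2 * (4 * (d - 1)) ≤ d ^ 2 * (6 * i * (d + Δ)) :=
      mul_le_mul_of_nonneg_left (by nlinarith) (sq_nonneg d)
    have e : 3 * d ^ 3 * n * (d + Δ) = 3 * d ^ 2 * (d + Δ) * (m + 2 * i) := by
      rw [hm]; ring
    rw [← hm]
    linarith
  have h2i : 0 ≤ 2 * i * (Δ - 1) := by nlinarith
  nlinarith [mul_le_mul_of_nonneg_left key h2i]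

theorem stmt_14_general (n d Δ i : ℕ) (hd : 1 ≤ d) (hΔ1 : 1 ≤ Δ) (hΔ2 : Δ ≤ n - 1)
    (H : SimpleGraph (Fin n)) (hH : H.IsRegularOfDegree (n - Δ - 1))
    (hi1 : 1 ≤ i) (hdn : 2 * i + 10 * d ≤ d * n)
    (G : SimpleGraph (Fin n)) (hreg : G.IsRegularOfDegree d)
    (hred : (G ⊓ Hᶜ).edgeSet.ncard = i) :
    (2 * i * ((Δ : ℤ) - 1) * ((d : ℤ) - 1) * (d * n - 2 * i - 10 * d) ^ 2
        - 6 * i * ((Δ : ℤ) - 1) * d ^ 3 * n * (d + Δ)) ≤ (bB1 H G : ℤ) ∧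
      (bB1 H G : ℤ) ≤ 2 * i * ((Δ : ℤ) - 1) * d * (d * n) ^ 2 := by
  have hHc : Hᶜ.IsRegularOfDegree Δ := by
    simpa [show n - 1 - (n - Δ - 1) = Δ by omega] using hH.compl
  have hR : #(adjPairs (G ⊓ Hᶜ)) = 2 * i := by rw [card_adjPairs, hred]
  have hm : #(adjPairs (G ⊓ H)) + 2 * i = d * n := by
    rw [← hR, card_adjPairs_inf_add_card_adjPairs_inf_compl,
      card_adjPairs_of_isRegularOfDegree hreg, Fintype.card_fin, mul_comm]
  constructor
  · have hlow := le_bB1 hreg hHc rfl (by omega)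
    rw [hR] at hlow
    push_cast [Nat.cast_sub hd, Nat.cast_sub hΔ1] at hlow
    exact (octagon_lower_bound_arith (by exact_mod_cast hd) (by exact_mod_cast hΔ1)
      (by exact_mod_cast hi1) (Nat.cast_nonneg _) (by exact_mod_cast hm)).trans hlow
  · have hup : bB1 H G ≤ 2 * i * ((Δ - 1) * (d * (d * n) ^ 2)) := by
      refine (bB1_le (fun v => (hreg v).le) (fun v => (hHc v).le)).trans ?_
      rw [hR]
      gcongr
      omega
    zify [hΔ1] at hup
    linarith

/-- Lemma 12. Suppose `H` is `(n-Δ-1)`-regular, `1 ≤ i ≤ (2/3)dΔ`,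
`dn ≥ 2i + 10d`, and `G` is `d`-regular with exactly `i` red edges. Then
`2i(Δ−1)(d−1)(dn−2i−10d)² − 6i(Δ−1)d³n(d+Δ) ≤ b_{B1+}(G) ≤ 2i(Δ−1)d(dn)²`. -/
theorem stmt_14 (n d Δ i : ℕ) (hd : 1 ≤ d) (hΔ1 : 1 ≤ Δ) (hΔ2 : Δ ≤ n - 1)
    (H : SimpleGraph (Fin n)) (hH : H.IsRegularOfDegree (n - Δ - 1))
    (hi1 : 1 ≤ i) (hi2 : 3 * i ≤ 2 * d * Δ) (hdn : 2 * i + 10 * d ≤ d * n)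
    (G : SimpleGraph (Fin n)) (hreg : G.IsRegularOfDegree d)
    (hred : (G ⊓ Hᶜ).edgeSet.ncard = i) :
    (2 * i * ((Δ : ℤ) - 1) * ((d : ℤ) - 1) * (d * n - 2 * i - 10 * d) ^ 2
        - 6 * i * ((Δ : ℤ) - 1) * d ^ 3 * n * (d + Δ)) ≤ (bB1 H G : ℤ) ∧
      (bB1 H G : ℤ) ≤ 2 * i * ((Δ : ℤ) - 1) * d * (d * n) ^ 2 :=
  stmt_14_general n d Δ i hd hΔ1 hΔ2 H hH hi1 hdn G hreg hred
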